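/- Let p > 1, k ∈ ℕ, and 0 ≤ y < x ≤ 1 be such that u ↦ cos((kπ/2)·I_p(u)) is decreasing on [y,x]. Then ∫_y^x cos((kπ/2)·I_p(u)) du > (2/(kπ))·(x − y)·[sin((kπ/2)I_p(x)) − sin((kπ/2)I_p(y))]/[I_p(x) − I_p(y)]. -/

import Mathlib

/-!
Write `c = kπ/2` and `J = I_p`, and let `L` be the chord of `J` over `[y, x]`. By strict
convexity `J < L` on `(y, x)`, and since `J` is increasing both `J u` and `L u` lie in
`[J y, J x]`. As `J` is continuous and increasing, the hypothesis says that `τ ↦ cos (c τ)` is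
antitone on `[J y, J x]`; it is even strictly antitone there, because a nonconstant real-analytic
function is nowhere locally constant. Hence `cos (c J) > cos (c L)` on `(y, x)`, and the integral
of `cos (c L)`, with `L` affine, is exactly the right-hand side.
-/

open Real

noncomputable def pip (p : ℝ) : ℝ := 2 * π / (p * Real.sin (π / p))

noncomputable def Ip (p y : ℝ) : ℝ :=
  (2 / pip p) * ∫ t in (0:ℝ)..y, (1 - t ^ p) ^ (-1 / p)

open MeasureTheory intervalIntegral Set Topology

theorem AntitoneOn.strictAntiOn_of_analyticOnNhd {f : ℝ → ℝ} {s : Set ℝ} [s.OrdConnected]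
    (h : AntitoneOn f s) (hf : AnalyticOnNhd ℝ f univ) (hf_ne : ∀ C, ∃ u, f u ≠ C) :
    StrictAntiOn f s := by
  intro a ha b hb hab
  refine (h ha hb hab.le).lt_of_ne fun hba => ?_
  have hconst : EqOn f (fun _ => f a) (Icc a b) := fun u hu => by
    have hus := Set.Icc_subset s ha hb hu
    exact le_antisymm (h ha hus hu.1) (hba ▸ h hus hb hu.2)
  have hmid : f =ᶠ[𝓝 ((a + b) / 2)] fun _ => f a :=
    Filter.eventuallyEq_of_mem (Ioo_mem_nhds (by linarith) (by linarith))
      (hconst.mono Ioo_subset_Icc_self)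
  obtain ⟨u, hu⟩ := hf_ne (f a)
  exact hu (congrFun (hf.eq_of_eventuallyEq analyticOnNhd_const hmid) u)

theorem AntitoneOn.of_comp {f g : ℝ → ℝ} {a b : ℝ} (hab : a ≤ b)
    (hg : ContinuousOn g (Icc a b)) (hg_mono : MonotoneOn g (Icc a b))
    (hfg : AntitoneOn (f ∘ g) (Icc a b)) : AntitoneOn f (Icc (g a) (g b)) := by
  intro s hs t ht hst
  obtain ⟨u, hu, rfl⟩ := intermediate_value_Icc hab hg hs
  obtain ⟨v, hv, rfl⟩ := intermediate_value_Icc hab hg ht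
  rcases le_total u v with huv | hvu
  · exact hfg hu hv huv
  · rw [le_antisymm hst (hg_mono hv hu hvu)]

theorem StrictConvexOn.lt_chord {J : ℝ → ℝ} {y x u : ℝ}
    (hJ : StrictConvexOn ℝ (Icc y x) J) (hu : u ∈ Ioo y x) :
    J u < J y + (J x - J y) / (x - y) * (u - y) := by
  have hyx : y < x := hu.1.trans hu.2
  have h := hJ.secant_strict_mono_aux2 (left_mem_Icc.2 hyx.le) (right_mem_Icc.2 hyx.le) hu.1 hu.2
  rw [div_lt_iff₀ (sub_pos.2 hu.1)] at h
  linarith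

theorem integral_comp_chord_lt_integral_comp {f J : ℝ → ℝ} {y x : ℝ} (hyx : y < x)
    (hJ_cont : ContinuousOn J (Icc y x)) (hJ_mono : MonotoneOn J (Icc y x))
    (hJ : StrictConvexOn ℝ (Icc y x) J) (hf_cont : Continuous f)
    (hf : StrictAntiOn f (Icc (J y) (J x))) :
    ∫ u in y..x, f (J y + (J x - J y) / (x - y) * (u - y)) < ∫ u in y..x, f (J u) := by
  set m := (J x - J y) / (x - y)
  have hm : 0 ≤ m := div_nonneg (sub_nonneg.2 (hJ_mono (left_mem_Icc.2 hyx.le)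
    (right_mem_Icc.2 hyx.le) hyx.le)) (sub_nonneg.2 hyx.le)
  have hmxy : m * (x - y) = J x - J y := div_mul_cancel₀ _ (sub_ne_zero.2 hyx.ne')
  have hpt : ∀ u ∈ Ioo y x, f (J y + m * (u - y)) < f (J u) := by
    intro u hu
    have huI : u ∈ Icc y x := Ioo_subset_Icc_self hu
    have hyu := hJ_mono (left_mem_Icc.2 hyx.le) huI hu.1.le
    have hux := hJ_mono huI (right_mem_Icc.2 hyx.le) hu.2.le
    have hchord := hJ.lt_chord hu
    have hmu : m * (u - y) ≤ m * (x - y) := by gcongr; exact hu.2.le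
    exact hf ⟨hyu, hux⟩ ⟨by linarith, by linarith⟩ hchord
  have hint_L : IntervalIntegrable (fun u => f (J y + m * (u - y))) volume y x :=
    (hf_cont.comp (by fun_prop)).intervalIntegrable _ _
  have hint_J : IntervalIntegrable (fun u => f (J u)) volume y x :=
    (hf_cont.comp_continuousOn hJ_cont).intervalIntegrable_of_Icc hyx.le
  have h := intervalIntegral_pos_of_pos_on (hint_J.sub hint_L)
    (fun u hu => sub_pos.2 (hpt u hu)) hyx
  rw [integral_sub hint_J hint_L] at h
  linarith

theorem integral_cos_mul_chord {c A B y x : ℝ} (hc : c ≠ 0) (hAB : A ≠ B) (hyx : y ≠ x) :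
    ∫ u in y..x, cos (c * (A + (B - A) / (x - y) * (u - y))) =
      (x - y) / c * ((sin (c * B) - sin (c * A)) / (B - A)) := by
  have hBA : B - A ≠ 0 := sub_ne_zero.2 hAB.symm
  have hxy : x - y ≠ 0 := sub_ne_zero.2 hyx.symm
  set m := (B - A) / (x - y) with hm
  have hcm : c * m ≠ 0 := mul_ne_zero hc (div_ne_zero hBA hxy)
  have h_affine : ∀ u, c * (A + m * (u - y)) = c * m * u + (c * A - c * m * y) := fun u => by ring
  simp_rw [h_affine]
  rw [integral_comp_mul_add cos hcm, integral_cos, smul_eq_mul,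
    show c * m * x + (c * A - c * m * y) = c * B by rw [hm]; field_simp; ring,
    show c * m * y + (c * A - c * m * y) = c * A by ring, hm]
  field_simp

section Ip

variable {p : ℝ}

theorem pip_pos (hp : 1 < p) : 0 < pip p := by
  have hp0 : 0 < p := one_pos.trans hp
  have hsin : 0 < sin (π / p) := sin_pos_of_pos_of_lt_pi (by positivity) (div_lt_self pi_pos hp)
  unfold pip
  positivity

theorem Ip_integrand_pos (hp : 0 < p) {t : ℝ} (ht0 : 0 ≤ t) (ht1 : t < 1) :
    0 < (1 - t ^ p) ^ (-1 / p) :=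
  rpow_pos_of_pos (sub_pos.2 (rpow_lt_one ht0 ht1 hp)) _

theorem strictMonoOn_Ip_integrand (hp : 0 < p) :
    StrictMonoOn (fun t : ℝ => (1 - t ^ p) ^ (-1 / p)) (Ico 0 1) := fun a ha b hb hab =>
  rpow_lt_rpow_of_neg (sub_pos.2 (rpow_lt_one hb.1 hb.2 hp))
    (sub_lt_sub_left (rpow_lt_rpow ha.1 hab hp) 1)
    (by rw [neg_div]; exact neg_lt_zero.2 (by positivity))

theorem intervalIntegrable_Ip_integrand (hp : 1 < p) :
    IntervalIntegrable (fun t : ℝ => (1 - t ^ p) ^ (-1 / p)) volume 0 1 := by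
  have hp0 : 0 < p := one_pos.trans hp
  have hexp : -1 < -1 / p := by rw [neg_div, neg_lt_neg_iff, div_lt_one hp0]; exact hp
  -- `t ^ p ≤ t` on `[0, 1]`, so the integrand is dominated by `(1 - t) ^ (-1 / p)`
  have hdom : IntervalIntegrable (fun t : ℝ => (1 - t) ^ (-1 / p)) volume 0 1 := by
    simpa using ((intervalIntegrable_rpow' (a := 0) (b := 1) hexp).comp_sub_left 1).symm
  have hmeas : Measurable fun t : ℝ => (1 - t ^ p) ^ (-1 / p) := by fun_prop
  refine hdom.mono_fun' hmeas.aestronglyMeasurable ?_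
  rw [Filter.EventuallyLE, ae_restrict_iff' measurableSet_uIoc, uIoc_of_le zero_le_one]
  refine Filter.Eventually.of_forall fun t ⟨ht0, ht1⟩ => ?_
  rw [norm_of_nonneg (rpow_nonneg (sub_nonneg.2 (rpow_le_one ht0.le ht1 hp0.le)) _)]
  rcases ht1.eq_or_lt with rfl | ht1
  · simp
  · refine rpow_le_rpow_of_nonpos (sub_pos.2 ht1) (sub_le_sub_left ?_ 1)
      (by rw [neg_div]; exact neg_nonpos.2 (by positivity))
    simpa using rpow_le_rpow_of_exponent_ge ht0 ht1.le hp.le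

theorem continuousOn_Ip (hp : 1 < p) : ContinuousOn (Ip p) (Icc 0 1) := by
  have h := continuousOn_primitive_interval' (intervalIntegrable_Ip_integrand hp) left_mem_uIcc
  rw [uIcc_of_le zero_le_one] at h
  exact continuousOn_const.mul h

theorem hasDerivAt_Ip (hp : 1 < p) {u : ℝ} (hu : u ∈ Ioo 0 1) :
    HasDerivAt (Ip p) (2 / pip p * (1 - u ^ p) ^ (-1 / p)) u := by
  have hp0 : 0 < p := one_pos.trans hp
  have hcont : ContinuousAt (fun t : ℝ => (1 - t ^ p) ^ (-1 / p)) u :=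
    (continuousAt_const.sub (continuousAt_id.rpow_const (Or.inl hu.1.ne'))).rpow_const
      (Or.inl (sub_pos.2 (rpow_lt_one hu.1.le hu.2 hp0)).ne')
  have hmeas : Measurable fun t : ℝ => (1 - t ^ p) ^ (-1 / p) := by fun_prop
  have hint := (intervalIntegrable_Ip_integrand hp).mono_set
    (uIcc_subset_uIcc_left (by rw [uIcc_of_le zero_le_one]; exact Ioo_subset_Icc_self hu))
  exact (integral_hasDerivAt_right hint hmeas.aestronglyMeasurable.stronglyMeasurableAtFilter
    hcont).const_mul _

theorem strictMonoOn_Ip (hp : 1 < p) : StrictMonoOn (Ip p) (Icc 0 1) := by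
  refine strictMonoOn_of_deriv_pos (convex_Icc 0 1) (continuousOn_Ip hp) fun u hu => ?_
  rw [interior_Icc] at hu
  rw [(hasDerivAt_Ip hp hu).deriv]
  exact mul_pos (div_pos two_pos (pip_pos hp)) (Ip_integrand_pos (one_pos.trans hp) hu.1.le hu.2)

theorem strictConvexOn_Ip (hp : 1 < p) : StrictConvexOn ℝ (Icc 0 1) (Ip p) := by
  refine StrictMonoOn.strictConvexOn_of_deriv (convex_Icc 0 1) (continuousOn_Ip hp) ?_
  rw [interior_Icc]
  intro a ha b hb hab
  rw [(hasDerivAt_Ip hp ha).deriv, (hasDerivAt_Ip hp hb).deriv]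
  exact mul_lt_mul_of_pos_left (strictMonoOn_Ip_integrand (one_pos.trans hp)
    (Ioo_subset_Ico_self ha) (Ioo_subset_Ico_self hb) hab) (div_pos two_pos (pip_pos hp))

end Ip

theorem stmt_12 (p : ℝ) (hp : 1 < p) (k : ℕ) (hk : 1 ≤ k) (y x : ℝ)
    (hy : 0 ≤ y) (hyx : y < x) (hx : x ≤ 1)
    (hdec : AntitoneOn (fun u => Real.cos (k * π / 2 * Ip p u)) (Set.Icc y x)) :
    (∫ u in y..x, Real.cos (k * π / 2 * Ip p u)) >
      2 / (k * π) * (x - y) *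
        ((Real.sin (k * π / 2 * Ip p x) - Real.sin (k * π / 2 * Ip p y)) /
          (Ip p x - Ip p y)) := by
  have hk' : (1 : ℝ) ≤ k := by exact_mod_cast hk
  set c : ℝ := k * π / 2
  have hc : 0 < c := by positivity
  have hsub : Icc y x ⊆ Icc 0 1 := Icc_subset_Icc hy hx
  have hJ_cont := (continuousOn_Ip hp).mono hsub
  have hJ_mono := (strictMonoOn_Ip hp).mono hsub
  have hnonconst : ∀ C, ∃ τ, cos (c * τ) ≠ C := fun C => by
    rcases eq_or_ne C 1 with rfl | hC
    · exact ⟨π / c, by rw [mul_div_cancel₀ _ hc.ne', cos_pi]; norm_num⟩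
    · exact ⟨0, by rwa [mul_zero, cos_zero, ne_comm]⟩
  have hanalytic : AnalyticOnNhd ℝ (fun τ => cos (c * τ)) univ := fun τ _ =>
    analyticAt_cos.comp (analyticAt_const.mul analyticAt_id)
  have hcos : StrictAntiOn (fun τ => cos (c * τ)) (Icc (Ip p y) (Ip p x)) :=
    (AntitoneOn.of_comp (f := fun τ => cos (c * τ)) hyx.le hJ_cont hJ_mono.monotoneOn
      hdec).strictAntiOn_of_analyticOnNhd hanalytic hnonconst
  have hlt := integral_comp_chord_lt_integral_comp hyx hJ_cont hJ_mono.monotoneOn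
    ((strictConvexOn_Ip hp).subset hsub (convex_Icc y x)) (by fun_prop) hcos
  rw [integral_cos_mul_chord hc.ne'
    (hJ_mono (left_mem_Icc.2 hyx.le) (right_mem_Icc.2 hyx.le) hyx).ne hyx.ne] at hlt
  rw [gt_iff_lt, show 2 / (k * π) * (x - y) = (x - y) / c by simp only [c]; field_simp]
  exact hlt
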